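/- arXiv:2009.12497 — 5 statements merged into one kernel-verified Lean document; each statement's English description precedes it below -/
import Mathlib

section
/- If there exists an orthogonal array OA(r,N,d,k) whose minimum distance w satisfies w ≥ k+1, then for every N' with N−w+k+1 ≤ N' ≤ N there exists an irredundant orthogonal array IrOA(r,N',d,k), i.e., an orthogonal array A' : Fin r → Fin N' → Fin d of strength k whose minimum distance is at least k+1. -/
/-- An `r × N` array over the alphabet `Fin d` is an orthogonal array of strength `k`
if for every set `T` of `k` columns and every assignment `f` of symbols to those columns,
exactly `r / d ^ k` rows agree with `f` on `T`. -/
def IsOA {r N d : ℕ} (A : Fin r → Fin N → Fin d) (k : ℕ) : Prop :=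
  ∀ T : Finset (Fin N), T.card = k → ∀ f : Fin N → Fin d,
    (Finset.univ.filter (fun i => ∀ t ∈ T, A i t = f t)).card = r / d ^ k

/-! Keep the first `N'` columns. The strength survives because the column sets of the
restricted array are column sets of `A`, and each distance drops by at most the
`N - N' ≤ w - (k + 1)` deleted columns. -/

theorem hammingDist_le_hammingDist_comp_add {ι ι' β : Type*} [Fintype ι] [Fintype ι']
    [DecidableEq β] (e : ι' ↪ ι) (x y : ι → β) :
    hammingDist x y ≤ hammingDist (x ∘ e) (y ∘ e) + (Fintype.card ι - Fintype.card ι') := by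
  classical
  have hcover : ({i | x i ≠ y i} : Finset ι) ⊆
      ({i' | x (e i') ≠ y (e i')} : Finset ι').map e ∪ (Finset.univ \ Finset.univ.map e) := by
    intro i hi
    by_cases hie : i ∈ Finset.univ.map e
    · obtain ⟨i', -, rfl⟩ := Finset.mem_map.mp hie
      exact Finset.mem_union_left _ (Finset.mem_map_of_mem e (by simpa using hi))
    · exact Finset.mem_union_right _ (by simpa using hie)
  calc hammingDist x y ≤ _ := Finset.card_le_card hcover
    _ ≤ _ := Finset.card_union_le _ _
    _ = _ := by rw [Finset.card_map, Finset.card_univ_sdiff, Finset.card_map]; rfl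

theorem IsOA.comp_embedding {r N N' d k : ℕ} {A : Fin r → Fin N → Fin d} (hA : IsOA A k)
    (e : Fin N' ↪ Fin N) : IsOA (fun i => A i ∘ e) k := by
  intro T hT f
  rcases Nat.eq_zero_or_pos r with rfl | hr
  · simp
  have hcard : (T.map e).card = k := by rw [Finset.card_map, hT]
  -- any row of `A` serves as the values of the extended assignment off the image of `e`
  rw [← hA (T.map e) hcard (Function.extend e f (A ⟨0, hr⟩))]
  simp [e.injective.extend_apply]

theorem exists_irredundant_oa_of_min_dist_general {r N d k w : ℕ} (A : Fin r → Fin N → Fin d)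
    (hA : IsOA A k)
    (hmin : ∀ i j : Fin r, i ≠ j → w ≤ hammingDist (A i) (A j)) :
    ∀ N' : ℕ, N - w + k + 1 ≤ N' → N' ≤ N →
      ∃ A' : Fin r → Fin N' → Fin d, IsOA A' k ∧
        ∀ i j : Fin r, i ≠ j → k + 1 ≤ hammingDist (A' i) (A' j) := by
  intro N' hN' hN'N
  let e := Fin.castLEEmb hN'N
  refine ⟨fun i => A i ∘ e, hA.comp_embedding e, fun i j hij => ?_⟩
  have hdel := hammingDist_le_hammingDist_comp_add e (A i) (A j)
  have hle : hammingDist (A i) (A j) ≤ N := by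
    simpa using hammingDist_le_card_fintype (x := A i) (y := A j)
  simp only [Fintype.card_fin] at hdel
  have := hmin i j hij
  show k + 1 ≤ hammingDist (A i ∘ e) (A j ∘ e)
  omega

/-- If there exists an `OA(r,N,d,k)` with minimum distance `w ≥ k+1`, then for every
`N'` with `N - w + k + 1 ≤ N' ≤ N` there exists an irredundant orthogonal array
`IrOA(r,N',d,k)`, i.e. an orthogonal array of strength `k` with minimum distance
at least `k+1`. -/
theorem exists_irredundant_oa_of_min_dist {r N d k w : ℕ} (A : Fin r → Fin N → Fin d)
    (hA : IsOA A k)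
    (hmin : ∀ i j : Fin r, i ≠ j → w ≤ hammingDist (A i) (A j))
    (hw : k + 1 ≤ w) :
    ∀ N' : ℕ, N - w + k + 1 ≤ N' → N' ≤ N →
      ∃ A' : Fin r → Fin N' → Fin d, IsOA A' k ∧
        ∀ i j : Fin r, i ≠ j → k + 1 ≤ hammingDist (A' i) (A' j) :=
  exists_irredundant_oa_of_min_dist_general A hA hmin
end

section
/- If linear irredundant orthogonal arrays of strength k exist for all lengths in an interval [N1, 2N1−1], they exist for all lengths at least N1: let F be a finite field, k ≥ 1, N1 ≥ 1. Suppose that for every N with N1 ≤ N ≤ 2N1 − 1 there exists a nonzero linear code C ⊆ F^N such that every nonzero codeword of C and every nonzero codeword of C⊥ has Hamming weight at least k+1. Then for every N ≥ N1 there exists such a code of length N. -/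
/-!
The direct sum `C₁ ⊕ C₂ ⊆ F^(a+b)` of two codes has dual `C₁⊥ ⊕ C₂⊥`, and the minimum
weight of a direct sum is the smaller of the two minimum weights. Hence a code of length
`N₁` and one of length `m` satisfying the weight conditions give one of length `N₁ + m`,
and strong induction reduces every length `N ≥ 2N₁` to a length in `[N₁, N - N₁]`.
-/

/-- The dual code of a linear code `C ⊆ F^ι`:
`C⊥ = {u : Σ_i u i * v i = 0 for all v ∈ C}`. -/
def dualCode {F : Type*} [Field F] {ι : Type*} [Fintype ι] (C : Submodule F (ι → F)) :
    Submodule F (ι → F) where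
  carrier := {u | ∀ v ∈ C, ∑ i, u i * v i = 0}
  add_mem' := by
    intro a b ha hb v hv
    simp only [Pi.add_apply, add_mul, Finset.sum_add_distrib]
    rw [ha v hv, hb v hv, add_zero]
  zero_mem' := by intro v hv; simp
  smul_mem' := by
    intro a u hu v hv
    simp only [Pi.smul_apply, smul_eq_mul, mul_assoc, ← Finset.mul_sum]
    rw [hu v hv, mul_zero]

section DirectSumCode

variable {F : Type*} [Field F] {a b : ℕ}

def HasMinWeightGE [DecidableEq F] {ι : Type*} [Fintype ι] (C : Submodule F (ι → F)) (d : ℕ) :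
    Prop :=
  ∀ c ∈ C, c ≠ 0 → d ≤ hammingNorm c

def directSumCode (C₁ : Submodule F (Fin a → F)) (C₂ : Submodule F (Fin b → F)) :
    Submodule F (Fin (a + b) → F) :=
  C₁.comap (LinearMap.funLeft F F (Fin.castAdd b)) ⊓ C₂.comap (LinearMap.funLeft F F (Fin.natAdd a))

theorem mem_dualCode {ι : Type*} [Fintype ι] {C : Submodule F (ι → F)} {u : ι → F} :
    u ∈ dualCode C ↔ ∀ v ∈ C, ∑ i, u i * v i = 0 :=
  Iff.rfl

variable {C₁ : Submodule F (Fin a → F)} {C₂ : Submodule F (Fin b → F)}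

theorem mem_directSumCode {w : Fin (a + b) → F} :
    w ∈ directSumCode C₁ C₂ ↔ w ∘ Fin.castAdd b ∈ C₁ ∧ w ∘ Fin.natAdd a ∈ C₂ :=
  Iff.rfl

theorem append_mem_directSumCode {v₁ : Fin a → F} {v₂ : Fin b → F} :
    Fin.append v₁ v₂ ∈ directSumCode C₁ C₂ ↔ v₁ ∈ C₁ ∧ v₂ ∈ C₂ := by
  simp [mem_directSumCode, Function.comp_def]

theorem directSumCode_ne_bot (h : C₁ ≠ ⊥) : directSumCode C₁ C₂ ≠ ⊥ := by
  obtain ⟨v, hv, hv0⟩ := Submodule.exists_mem_ne_zero_of_ne_bot h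
  refine (Submodule.ne_bot_iff _).2
    ⟨Fin.append v 0, append_mem_directSumCode.2 ⟨hv, C₂.zero_mem⟩, fun h0 => ?_⟩
  exact hv0 (funext fun i => by simpa using congrFun h0 (Fin.castAdd b i))

theorem dualCode_directSumCode :
    dualCode (directSumCode C₁ C₂) = directSumCode (dualCode C₁) (dualCode C₂) := by
  ext u
  rw [mem_directSumCode, mem_dualCode, mem_dualCode, mem_dualCode]
  constructor
  · intro hu
    refine ⟨fun v₁ hv₁ => ?_, fun v₂ hv₂ => ?_⟩
    · simpa [Fin.sum_univ_add] using hu _ (append_mem_directSumCode.2 ⟨hv₁, C₂.zero_mem⟩)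
    · simpa [Fin.sum_univ_add] using hu _ (append_mem_directSumCode.2 ⟨C₁.zero_mem, hv₂⟩)
  · rintro ⟨hu₁, hu₂⟩ v hv
    rw [Fin.sum_univ_add]
    exact (congrArg₂ (· + ·) (hu₁ _ hv.1) (hu₂ _ hv.2)).trans (add_zero 0)

variable [DecidableEq F]

theorem hammingNorm_fin_add (w : Fin (a + b) → F) :
    hammingNorm w = hammingNorm (w ∘ Fin.castAdd b) + hammingNorm (w ∘ Fin.natAdd a) := by
  simp only [hammingNorm, Finset.card_filter]
  exact Fin.sum_univ_add _

theorem HasMinWeightGE.directSumCode {d : ℕ} (h₁ : HasMinWeightGE C₁ d)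
    (h₂ : HasMinWeightGE C₂ d) :
    HasMinWeightGE (directSumCode C₁ C₂) d := by
  intro w hw hw0
  rw [mem_directSumCode] at hw
  rw [hammingNorm_fin_add]
  by_cases hl : w ∘ Fin.castAdd b = 0
  · have hr : w ∘ Fin.natAdd a ≠ 0 := by
      intro hr
      apply hw0
      rw [← hammingNorm_eq_zero, hammingNorm_fin_add, hl, hr, hammingNorm_zero, hammingNorm_zero]
    have := h₂ _ hw.2 hr
    omega
  · have := h₁ _ hw.1 hl
    omega

end DirectSumCode

theorem linear_irOA_all_lengths_general (F : Type*) [Field F] [DecidableEq F]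
    (k N1 : ℕ) (hN1 : 1 ≤ N1)
    (h : ∀ N : ℕ, N1 ≤ N → N ≤ 2 * N1 - 1 →
      ∃ C : Submodule F (Fin N → F), C ≠ ⊥ ∧
        (∀ c ∈ C, c ≠ 0 → k + 1 ≤ hammingNorm c) ∧
        (∀ u ∈ dualCode C, u ≠ 0 → k + 1 ≤ hammingNorm u)) :
    ∀ N : ℕ, N1 ≤ N →
      ∃ C : Submodule F (Fin N → F), C ≠ ⊥ ∧
        (∀ c ∈ C, c ≠ 0 → k + 1 ≤ hammingNorm c) ∧
        (∀ u ∈ dualCode C, u ≠ 0 → k + 1 ≤ hammingNorm u) := by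
  intro N
  induction N using Nat.strong_induction_on with
  | _ N ih =>
    intro hN
    by_cases hsmall : N ≤ 2 * N1 - 1
    · exact h N hN hsmall
    obtain ⟨m, rfl⟩ : ∃ m, N = N1 + m := ⟨N - N1, by omega⟩
    obtain ⟨C₁, hC₁, hw₁, hd₁⟩ := h N1 le_rfl (by omega)
    obtain ⟨C₂, -, hw₂, hd₂⟩ := ih m (by omega) (by omega)
    refine ⟨directSumCode C₁ C₂, directSumCode_ne_bot hC₁, HasMinWeightGE.directSumCode hw₁ hw₂, ?_⟩
    rw [dualCode_directSumCode]
    exact HasMinWeightGE.directSumCode hd₁ hd₂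

/-- If linear irredundant orthogonal arrays of strength `k` (equivalently, nonzero
linear codes all of whose nonzero codewords, and all nonzero codewords of the dual,
have Hamming weight at least `k + 1`) exist for all lengths in the interval
`[N1, 2·N1 - 1]`, then they exist for all lengths `N ≥ N1`. -/
theorem linear_irOA_all_lengths (F : Type*) [Field F] [Fintype F] [DecidableEq F]
    (k N1 : ℕ) (hk : 1 ≤ k) (hN1 : 1 ≤ N1)
    (h : ∀ N : ℕ, N1 ≤ N → N ≤ 2 * N1 - 1 →
      ∃ C : Submodule F (Fin N → F), C ≠ ⊥ ∧
        (∀ c ∈ C, c ≠ 0 → k + 1 ≤ hammingNorm c) ∧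
        (∀ u ∈ dualCode C, u ≠ 0 → k + 1 ≤ hammingNorm u)) :
    ∀ N : ℕ, N1 ≤ N →
      ∃ C : Submodule F (Fin N → F), C ≠ ⊥ ∧
        (∀ c ∈ C, c ≠ 0 → k + 1 ≤ hammingNorm c) ∧
        (∀ u ∈ dualCode C, u ≠ 0 → k + 1 ≤ hammingNorm u) :=
  linear_irOA_all_lengths_general F k N1 hN1 h
end

section
/- Combinatorial core of Theorem 5, first part: let k ≥ 1 and let F be a finite field with q = |F| ≥ 2k − 1. Then for every N with 2k ≤ N ≤ q + 1 there exists a nonzero linear code C ⊆ F^N such that every nonzero codeword of C and every nonzero codeword of C⊥ has Hamming weight at least k+1 (equivalently, a linear irredundant orthogonal array IrOA(|C|, N, q, k), which yields a k-uniform state of N parties with local dimension q). -/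
open Polynomial Finset Module

theorem card_lt_add_hammingNorm {ι β : Type*} [Fintype ι] [Zero β] [DecidableEq β]
    {n : ℕ} {c : ι → β} (hc : c ≠ 0)
    (hvan : ∀ S : Finset ι, n ≤ #S → (∀ i ∈ S, c i = 0) → c = 0) :
    Fintype.card ι < n + hammingNorm c := by
  have hsplit : #{i | c i = 0} + hammingNorm c = Fintype.card ι :=
    card_filter_add_card_filter_not _
  by_contra! hle
  exact hc (hvan {i | c i = 0} (by omega) fun i hi => (mem_filter.1 hi).2)

section LinearCode

variable {F ι : Type*} [Field F] [Fintype ι]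

theorem lt_hammingNorm_of_mem_dualCode [DecidableEq F] {C : Submodule F (ι → F)} {n : ℕ}
    (hC : ∀ S : Finset ι, #S ≤ n → ∀ i ∈ S, ∃ c ∈ C, c i ≠ 0 ∧ ∀ j ∈ S, j ≠ i → c j = 0)
    {u : ι → F} (hu : u ∈ dualCode C) (hu0 : u ≠ 0) : n < hammingNorm u := by
  by_contra! hle
  obtain ⟨i, hi⟩ := Function.ne_iff.1 hu0
  obtain ⟨c, hcC, hci, hc⟩ := hC {j | u j ≠ 0} hle i (by simpa using hi)
  have hsum : ∑ j, u j * c j = u i * c i := by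
    refine sum_eq_single i (fun j _ hji => ?_) (by simp)
    by_cases huj : u j = 0
    · rw [huj, zero_mul]
    · rw [hc j (by simpa using huj) hji, mul_zero]
  exact mul_ne_zero hi hci (hsum ▸ hu c hcC)

theorem surjective_restrict_of_finrank_eq {C : Submodule F (ι → F)} {S : Finset ι}
    (hrank : finrank F C = #S) (hvan : ∀ c ∈ C, (∀ i ∈ S, c i = 0) → c = 0) :
    Function.Surjective (LinearMap.funLeft F F ((↑) : S → ι) ∘ₗ C.subtype) := by
  refine (LinearMap.injective_iff_surjective_of_finrank_eq_finrank (by simpa using hrank)).1 ?_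
  rw [← LinearMap.ker_eq_bot, LinearMap.ker_eq_bot']
  intro c hc
  ext1
  refine hvan c c.2 fun i hi => ?_
  simpa using congrFun hc ⟨i, hi⟩

theorem exists_mem_eq_single_of_finrank_eq {C : Submodule F (ι → F)} {n : ℕ}
    (hn : n ≤ Fintype.card ι) (hrank : finrank F C = n)
    (hvan : ∀ c ∈ C, ∀ S : Finset ι, n ≤ #S → (∀ i ∈ S, c i = 0) → c = 0)
    {T : Finset ι} (hT : #T ≤ n) {i : ι} (hi : i ∈ T) :
    ∃ c ∈ C, c i ≠ 0 ∧ ∀ j ∈ T, j ≠ i → c j = 0 := by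
  classical
  obtain ⟨S, hTS, hS⟩ := exists_superset_card_eq hT (by simpa using hn)
  obtain ⟨c, hc⟩ := surjective_restrict_of_finrank_eq (hrank.trans hS.symm)
    (fun c hc => hvan c hc S hS.ge) (Pi.single ⟨i, hTS hi⟩ 1)
  refine ⟨c, c.2, ?_, fun j hj hji => ?_⟩
  · have hci : (c : ι → F) i = 1 := by simpa using congrFun hc ⟨i, hTS hi⟩
    exact hci ▸ one_ne_zero
  · simpa [hji] using congrFun hc ⟨j, hTS hj⟩

end LinearCode

section DoublyExtendedRS

variable {F : Type*} [Field F]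

/-- A polynomial of degree `< n` is read as a binary form of degree `n - 1`; its value at the
point `∞ = [1 : 0]` of the projective line is then the coefficient of `X ^ (n - 1)`. -/
noncomputable def projEval (n : ℕ) : Option F → F[X] →ₗ[F] F
  | some a => leval a
  | none => lcoeff F (n - 1)

theorem eq_zero_of_projEval_eq_zero {n : ℕ} {p : F[X]} (hp : p ∈ degreeLT F n)
    {S : Finset (Option F)} (hS : n ≤ #S) (hvan : ∀ x ∈ S, projEval n x p = 0) : p = 0 := by
  have hroots : ∀ a ∈ S.eraseNone, p.eval a = 0 := fun a ha =>
    hvan (some a) (mem_eraseNone.1 ha)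
  rw [mem_degreeLT] at hp
  by_cases hinf : none ∈ S
  · have hp' : p.degree < ↑(n - 1) := by
      rw [degree_lt_iff_coeff_zero] at hp ⊢
      intro m hm
      rcases hm.lt_or_eq with hm | rfl
      · exact hp m (by omega)
      · exact hvan none hinf
    refine eq_zero_of_degree_lt_of_eval_finset_eq_zero _ (hp'.trans_le ?_) hroots
    rw [card_eraseNone_of_mem hinf]
    exact_mod_cast Nat.sub_le_sub_right hS 1
  · refine eq_zero_of_degree_lt_of_eval_finset_eq_zero _ (hp.trans_le ?_) hroots
    rw [card_eraseNone_of_not_mem hinf]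
    exact_mod_cast hS

variable {ι : Type*}

noncomputable def doublyExtendedRS (n : ℕ) (pt : ι → Option F) : Submodule F (ι → F) :=
  LinearMap.range ((LinearMap.pi fun i => projEval n (pt i)) ∘ₗ (degreeLT F n).subtype)

theorem eq_zero_of_mem_doublyExtendedRS {n : ℕ} {pt : ι ↪ Option F} {c : ι → F}
    (hc : c ∈ doublyExtendedRS n pt) {S : Finset ι} (hS : n ≤ #S) (hvan : ∀ i ∈ S, c i = 0) :
    c = 0 := by
  obtain ⟨⟨p, hp⟩, rfl⟩ := hc
  have : p = 0 := eq_zero_of_projEval_eq_zero hp (S := S.map pt) (by simpa using hS) <| by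
    simpa using hvan
  simp [this]

theorem finrank_doublyExtendedRS [Fintype ι] {n : ℕ} {pt : ι ↪ Option F}
    (hn : n ≤ Fintype.card ι) :
    finrank F (doublyExtendedRS n pt) = n := by
  rw [doublyExtendedRS, LinearMap.finrank_range_of_inj, (degreeLTEquiv F n).finrank_eq,
    finrank_fin_fun]
  rw [← LinearMap.ker_eq_bot, LinearMap.ker_eq_bot']
  intro p hp
  ext1
  exact eq_zero_of_projEval_eq_zero p.2 (S := univ.map pt) (by simpa using hn)
    (by simpa using congrFun hp)

end DoublyExtendedRS

theorem linear_irOA_of_card_ge_two_k_sub_one_general (F : Type*) [Field F] [Fintype F]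
    [DecidableEq F] (k : ℕ) (hk : 1 ≤ k) :
    ∀ N : ℕ, 2 * k ≤ N → N ≤ Fintype.card F + 1 →
      ∃ C : Submodule F (Fin N → F), C ≠ ⊥ ∧
        (∀ c ∈ C, c ≠ 0 → k + 1 ≤ hammingNorm c) ∧
        (∀ u ∈ dualCode C, u ≠ 0 → k + 1 ≤ hammingNorm u) := by
  intro N hkN hNq
  obtain ⟨pt⟩ : Nonempty (Fin N ↪ Option F) :=
    Function.Embedding.nonempty_of_card_le (by simpa using hNq)
  have hn : N - k ≤ Fintype.card (Fin N) := by simp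
  have hrank : finrank F (doublyExtendedRS (N - k) pt) = N - k := finrank_doublyExtendedRS hn
  have hvan : ∀ c ∈ doublyExtendedRS (N - k) pt, ∀ S : Finset (Fin N), N - k ≤ #S →
      (∀ i ∈ S, c i = 0) → c = 0 := fun c hc S => eq_zero_of_mem_doublyExtendedRS hc
  refine ⟨doublyExtendedRS (N - k) pt, fun hbot => ?_, fun c hc hc0 => ?_, fun u hu hu0 => ?_⟩
  · rw [hbot, finrank_bot] at hrank
    omega
  · have := card_lt_add_hammingNorm hc0 (hvan c hc)
    rw [Fintype.card_fin] at this
    omega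
  · have := lt_hammingNorm_of_mem_dualCode
      (fun T hT i hi => exists_mem_eq_single_of_finrank_eq hn hrank hvan hT hi) hu hu0
    omega

/-- Theorem 5, first part (combinatorial core): if `k ≥ 1` and `q = |F| ≥ 2k - 1`,
then for every `N` with `2k ≤ N ≤ q + 1` there is a nonzero linear code `C ⊆ F^N`
such that every nonzero codeword of `C` and of `C⊥` has Hamming weight at least
`k + 1` (a linear irredundant orthogonal array `IrOA(|C|, N, q, k)`, yielding a
`k`-uniform state of `N` parties with local dimension `q`). -/
theorem linear_irOA_of_card_ge_two_k_sub_one (F : Type*) [Field F] [Fintype F]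
    [DecidableEq F] (k : ℕ) (hk : 1 ≤ k) (hq : 2 * k - 1 ≤ Fintype.card F) :
    ∀ N : ℕ, 2 * k ≤ N → N ≤ Fintype.card F + 1 →
      ∃ C : Submodule F (Fin N → F), C ≠ ⊥ ∧
        (∀ c ∈ C, c ≠ 0 → k + 1 ≤ hammingNorm c) ∧
        (∀ u ∈ dualCode C, u ≠ 0 → k + 1 ≤ hammingNorm u) :=
  linear_irOA_of_card_ge_two_k_sub_one_general F k hk
end

section
/- Combinatorial analogue of Lemma 1 (tensor product of uniform states): let A : Fin r1 → Fin N → Fin d1 be an irredundant orthogonal array of strength k and B : Fin r2 → Fin N → Fin d2 be an irredundant orthogonal array of strength k. Then the array C : (Fin r1 × Fin r2) → Fin N → (Fin d1 × Fin d2) defined by C (i,j) n = (A i n, B j n) is an irredundant orthogonal array of strength k over the alphabet Fin d1 × Fin d2 of size d1·d2 with r1·r2 rows. -/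
/-!
Rows of the paired array that agree with `f = (f₁, f₂)` on a column set `T` are exactly the
pairs of a row of `A` agreeing with `f₁` and a row of `B` agreeing with `f₂`, so their number is
`(r₁ / d₁ ^ k) * (r₂ / d₂ ^ k)`. This equals `r₁ r₂ / (d₁ d₂) ^ k` because in an orthogonal array
of strength `k` the row count is divisible by `d ^ k`. Two distinct pairs of rows differ in one
component, and irredundancy of that component gives a separating column outside `T`.
-/

/-- An array with rows indexed by a finite type `R` and entries in a finite alphabet
`S` is an orthogonal array of strength `k` if for every set `T` of `k` columns and
every assignment `f` of symbols to those columns, exactly `|R| / |S| ^ k` rows agree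
with `f` on `T`. -/
def IsOAGen {R S : Type*} [Fintype R] [Fintype S] [DecidableEq S] {N : ℕ}
    (A : R → Fin N → S) (k : ℕ) : Prop :=
  ∀ T : Finset (Fin N), T.card = k → ∀ f : Fin N → S,
    (Finset.univ.filter (fun i => ∀ t ∈ T, A i t = f t)).card =
      Fintype.card R / Fintype.card S ^ k

/-- An array is irredundant (for strength `k`) if for every set of `k` columns,
any two rows with distinct indices differ in some coordinate outside those columns. -/
def IsIrredundantGen {R S : Type*} {N : ℕ} (A : R → Fin N → S) (k : ℕ) : Prop :=
  ∀ T : Finset (Fin N), T.card = k → ∀ i j : R, i ≠ j →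
    ∃ n : Fin N, n ∉ T ∧ A i n ≠ A j n

open Finset Fintype

theorem IsOAGen.pow_card_dvd_card {R S : Type*} [Fintype R] [Fintype S] [DecidableEq S] {N k : ℕ}
    {A : R → Fin N → S} (hA : IsOAGen A k) {T : Finset (Fin N)} (hT : #T = k) :
    card S ^ k ∣ card R := by
  rcases isEmpty_or_nonempty S with hS | ⟨⟨s₀⟩⟩
  · rcases k.eq_zero_or_pos with rfl | hk
    · simp
    · obtain ⟨t₀, -⟩ := card_pos.mp (hT ▸ hk)
      have : IsEmpty R := ⟨fun i => hS.false (A i t₀)⟩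
      simp
  · -- the fibres of `i ↦ T.restrict (A i)` partition the rows into `|S| ^ k` classes of equal size
    have hfiber (g : T → S) : #{i | T.restrict (A i) = g} = card R / card S ^ k := by
      rw [← hA T hT fun n => if h : n ∈ T then g ⟨n, h⟩ else s₀]
      simp +contextual [funext_iff]
    refine Dvd.intro (card R / card S ^ k) ?_
    calc card S ^ k * (card R / card S ^ k) = ∑ g : T → S, #{i | T.restrict (A i) = g} := by
          simp [hfiber, hT]
      _ = card R := (card_eq_sum_card_fiberwise fun i _ => mem_univ _).symm

section

variable {R₁ R₂ S₁ S₂ : Type*} {N k : ℕ}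

theorem IsOAGen.prod [Fintype R₁] [Fintype R₂] [Fintype S₁] [Fintype S₂] [DecidableEq S₁]
    [DecidableEq S₂] {A : R₁ → Fin N → S₁} {B : R₂ → Fin N → S₂}
    (hA : IsOAGen A k) (hB : IsOAGen B k) :
    IsOAGen (fun (p : R₁ × R₂) n => (A p.1 n, B p.2 n)) k := by
  intro T hT f
  dsimp only
  have hsplit : univ.filter (fun p : R₁ × R₂ => ∀ t ∈ T, (A p.1 t, B p.2 t) = f t) =
      univ.filter (fun i => ∀ t ∈ T, A i t = (f t).1) ×ˢ
        univ.filter (fun j => ∀ t ∈ T, B j t = (f t).2) := by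
    ext p
    simp [Prod.ext_iff, forall_and]
  rw [hsplit, card_product, hA T hT, hB T hT, card_prod, card_prod, mul_pow,
    Nat.div_mul_div_comm (hA.pow_card_dvd_card hT) (hB.pow_card_dvd_card hT)]

theorem IsIrredundantGen.prod {A : R₁ → Fin N → S₁} {B : R₂ → Fin N → S₂}
    (hA : IsIrredundantGen A k) (hB : IsIrredundantGen B k) :
    IsIrredundantGen (fun (p : R₁ × R₂) n => (A p.1 n, B p.2 n)) k := by
  intro T hT p q hpq
  rcases not_and_or.mp (Prod.ext_iff.not.mp hpq) with h₁ | h₂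
  · obtain ⟨n, hn, hne⟩ := hA T hT p.1 q.1 h₁
    exact ⟨n, hn, fun h => hne (congrArg Prod.fst h)⟩
  · obtain ⟨n, hn, hne⟩ := hB T hT p.2 q.2 h₂
    exact ⟨n, hn, fun h => hne (congrArg Prod.snd h)⟩

end

/-- Combinatorial analogue of the tensor product of uniform states: the entrywise
pairing of an `IrOA(r1, N, d1, k)` and an `IrOA(r2, N, d2, k)` is an
`IrOA(r1·r2, N, d1·d2, k)` over the product alphabet. -/
theorem irOA_product {r1 r2 N d1 d2 k : ℕ}
    (A : Fin r1 → Fin N → Fin d1) (B : Fin r2 → Fin N → Fin d2)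
    (hA : IsOAGen A k) (hAirr : IsIrredundantGen A k)
    (hB : IsOAGen B k) (hBirr : IsIrredundantGen B k) :
    IsOAGen (fun (p : Fin r1 × Fin r2) (n : Fin N) => (A p.1 n, B p.2 n)) k ∧
      IsIrredundantGen (fun (p : Fin r1 × Fin r2) (n : Fin N) => (A p.1 n, B p.2 n)) k :=
  ⟨hA.prod hB, hAirr.prod hBirr⟩
end

section
/- Intermediate claim of Proposition 8: let (b_j)_{j∈J} and (c_j)_{j∈J} be orthonormal families in a complex inner product space H, indexed by the same set J. If for every u, v ∈ ℂ with |u|² + |v|² = 1 the family (u • b_j + v • c_j)_{j∈J} is orthonormal, then ⟪b_s, c_t⟫ = 0 for all s, t ∈ J. -/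
/-!
Expanding `⟪u • b s + v • c s, u • b t + v • c t⟫` and using the orthonormality of `b`, `c` and of
the superposition leaves `ū v x + v̄ u y = 0` whenever `|u|² + |v|² = 1`, where
`x = ⟪b s, c t⟫` and `y = ⟪c s, b t⟫`. Taking `u = v = 1/√2` gives `x + y = 0`, and
`u = 1/√2`, `v = i/√2` gives `x - y = 0`; hence `x = 0`.
-/

open ComplexConjugate

theorem Orthonormal.conj_mul_inner_add_conj_mul_inner_eq_zero {𝕜 E ι : Type*} [RCLike 𝕜]
    [NormedAddCommGroup E] [InnerProductSpace 𝕜 E] {b c : ι → E}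
    (hb : Orthonormal 𝕜 b) (hc : Orthonormal 𝕜 c) {u v : 𝕜} (huv : ‖u‖ ^ 2 + ‖v‖ ^ 2 = 1)
    (h : Orthonormal 𝕜 fun j => u • b j + v • c j) (s t : ι) :
    conj u * v * inner 𝕜 (b s) (c t) + conj v * u * inner 𝕜 (c s) (b t) = 0 := by
  classical
  have hw := orthonormal_iff_ite.mp h s t
  simp only [inner_add_left, inner_add_right, inner_smul_left, inner_smul_right,
    orthonormal_iff_ite.mp hb s t, orthonormal_iff_ite.mp hc s t] at hw
  have hnorm : conj u * u + conj v * v = 1 := by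
    rw [RCLike.conj_mul, RCLike.conj_mul]
    exact_mod_cast huv
  split_ifs at hw
  · linear_combination hw - hnorm
  · linear_combination hw

theorem Complex.eq_zero_of_forall_conj_mul_add_conj_mul_eq_zero {x y : ℂ}
    (h : ∀ u v : ℂ, ‖u‖ ^ 2 + ‖v‖ ^ 2 = 1 → conj u * v * x + conj v * u * y = 0) : x = 0 := by
  set r : ℂ := (((√2)⁻¹ : ℝ) : ℂ)
  have hr_norm : ‖r‖ ^ 2 = 2⁻¹ := by
    rw [norm_real, Real.norm_eq_abs, sq_abs, inv_pow, Real.sq_sqrt zero_le_two]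
  have hr : conj r * r = 2⁻¹ := by
    rw [conj_mul', ← ofReal_pow, hr_norm]
    norm_num
  have hsum := h r r (by rw [hr_norm]; norm_num)
  have hdiff := h r (r * I) (by rw [norm_mul, norm_I, mul_one, hr_norm]; norm_num)
  rw [map_mul, conj_I] at hdiff
  linear_combination hsum - I * hdiff - 2 * x * hr + conj r * r * (x - y) * I_sq

/-- If `(b j)` and `(c j)` are orthonormal families in a complex inner product space
such that for every `u v : ℂ` with `|u|² + |v|² = 1` the family `(u • b j + v • c j)`
is orthonormal, then `⟪b s, c t⟫ = 0` for all `s, t`. -/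
theorem inner_eq_zero_of_superpositions_orthonormal
    {H : Type*} [NormedAddCommGroup H] [InnerProductSpace ℂ H] {J : Type*}
    (b c : J → H) (hb : Orthonormal ℂ b) (hc : Orthonormal ℂ c)
    (h : ∀ u v : ℂ, ‖u‖ ^ 2 + ‖v‖ ^ 2 = 1 →
      Orthonormal ℂ (fun j => u • b j + v • c j)) :
    ∀ s t : J, (inner ℂ (b s) (c t) : ℂ) = 0 := fun s t =>
  Complex.eq_zero_of_forall_conj_mul_add_conj_mul_eq_zero fun _ _ huv =>
    hb.conj_mul_inner_add_conj_mul_inner_eq_zero hc huv (h _ _ huv) s t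
end
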